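/- Let λ, μ > 0 with ρ = λ/μ < 1, and let i ≥ 0 be an integer. Then for all t > 0, the function EL_i defined by the explicit integral formula satisfies d/dt EL_i(t) = λ − μ·(1 − p_{i0}(t)), where p_{i0}(t) = (2/π)·ρ^{−i/2}·∫₀^π e^{−μ t γ(y)}/γ(y) · a_i(y)·a_0(y) dy + (1−ρ). -/

import Mathlib

/-! Since `γ > 0` on `[0, π]` when `ρ < 1`, the integrand of `EL_i` is smooth in `t` with a bounded
derivative, so one differentiates under the integral sign: `∂ₜ (e^{-μtγ}/γ²) = -μ e^{-μtγ}/γ`.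
As `a_0(y) = -√ρ sin y`, the resulting integral is `-1/√ρ` times the one in `p_{i0}(t)`, and the
constants match because `μρ = λ`. -/

open Real MeasureTheory Set Filter

/-- γ(y) = 1 + ρ − 2√ρ·cos(y). -/
noncomputable def gam (ρ y : ℝ) : ℝ := 1 + ρ - 2 * Real.sqrt ρ * Real.cos y

/-- a_k(y) = sin(k·y) − √ρ·sin((k+1)·y). -/
noncomputable def aco (ρ : ℝ) (k : ℕ) (y : ℝ) : ℝ :=
  Real.sin ((k : ℝ) * y) - Real.sqrt ρ * Real.sin (((k : ℝ) + 1) * y)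

/-- Transient expected queue length of an M/M/1 queue started with `i` customers. -/
noncomputable def EL (lam mu : ℝ) (i : ℕ) (t : ℝ) : ℝ :=
  (2 / Real.pi) * (lam / mu) ^ ((1 - (i : ℝ)) / 2) *
    (∫ y in (0 : ℝ)..Real.pi,
      Real.exp (-(mu * t * gam (lam / mu) y)) / (gam (lam / mu) y) ^ 2 *
        (aco (lam / mu) i y * Real.sin y)) +
  (lam / mu) / (1 - lam / mu)

/-- Transient probability that an M/M/1 queue started with `i` customers has `j` at time `t`. -/
noncomputable def pq (lam mu : ℝ) (i j : ℕ) (t : ℝ) : ℝ :=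
  (2 / Real.pi) * (lam / mu) ^ (((j : ℝ) - (i : ℝ)) / 2) *
    (∫ y in (0 : ℝ)..Real.pi,
      Real.exp (-(mu * t * gam (lam / mu) y)) / gam (lam / mu) y *
        (aco (lam / mu) i y * aco (lam / mu) j y)) +
  (1 - lam / mu) * (lam / mu) ^ j

/-- Erlang(n) density with rate `mu`: f_n(t) = μⁿ t^{n−1} e^{−μt}/(n−1)!. -/
noncomputable def erl (mu : ℝ) (n : ℕ) (t : ℝ) : ℝ :=
  mu ^ n * t ^ (n - 1) * Real.exp (-(mu * t)) / (Nat.factorial (n - 1) : ℝ)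

/-- Expected total time to complete queue with `a` customers first, then queue with `b`. -/
noncomputable def ETT (lam mu : ℝ) (a b : ℕ) : ℝ :=
  ((a : ℝ) + 2) / mu + (1 / mu) * ∫ t in Set.Ioi (0 : ℝ), erl mu (a + 1) t * EL lam mu b t

theorem hasDerivAt_intervalIntegral_of_continuous {E : Type*} [NormedAddCommGroup E]
    [NormedSpace ℝ E] {F F' : ℝ → ℝ → E} (hF : Continuous (Function.uncurry F))
    (hF' : Continuous (Function.uncurry F'))
    (hderiv : ∀ s y, HasDerivAt (fun s => F s y) (F' s y) s) (a b t : ℝ) :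
    HasDerivAt (fun s => ∫ y in a..b, F s y) (∫ y in a..b, F' t y) t := by
  obtain ⟨C, hC⟩ := (isCompact_closedBall t 1 |>.prod isCompact_uIcc).exists_bound_of_continuousOn
    hF'.continuousOn
  refine (intervalIntegral.hasDerivAt_integral_of_dominated_loc_of_deriv_le (bound := fun _ => C)
    (Metric.ball_mem_nhds t one_pos) (.of_forall fun s => (hF.uncurry_left s).aestronglyMeasurable)
    ((hF.uncurry_left t).intervalIntegrable a b) (hF'.uncurry_left t).aestronglyMeasurable
    (.of_forall fun y hy s hs => hC (s, y) ⟨Metric.ball_subset_closedBall hs, uIoc_subset_uIcc hy⟩)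
    intervalIntegrable_const (.of_forall fun y _ s _ => hderiv s y)).2

theorem gam_pos {ρ : ℝ} (h0 : 0 ≤ ρ) (h1 : ρ < 1) (y : ℝ) : 0 < gam ρ y := by
  have hsq : Real.sqrt ρ ^ 2 = ρ := Real.sq_sqrt h0
  have hs : Real.sqrt ρ < 1 := by nlinarith [Real.sqrt_nonneg ρ]
  have := mul_le_mul_of_nonneg_left (Real.cos_le_one y) (Real.sqrt_nonneg ρ)
  rw [gam]
  nlinarith

@[fun_prop]
theorem continuous_gam (ρ : ℝ) : Continuous (gam ρ) := by unfold gam; fun_prop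

@[fun_prop]
theorem continuous_aco (ρ : ℝ) (k : ℕ) : Continuous (aco ρ k) := by unfold aco; fun_prop

theorem aco_zero (ρ y : ℝ) : aco ρ 0 y = -(Real.sqrt ρ * Real.sin y) := by simp [aco]

theorem hasDerivAt_exp_div_sq_mul {g : ℝ} (hg : g ≠ 0) (m c s : ℝ) :
    HasDerivAt (fun s => Real.exp (-(m * s * g)) / g ^ 2 * c)
      (-m * (Real.exp (-(m * s * g)) / g * c)) s := by
  have hlin := (hasDerivAt_id' s).const_mul (-(m * g))
  rw [show (fun s => Real.exp (-(m * s * g)) / g ^ 2 * c)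
      = fun s => Real.exp (-(m * g) * s) / g ^ 2 * c by funext s; ring_nf]
  refine (hlin.exp.div_const (g ^ 2) |>.mul_const c).congr_deriv ?_
  field_simp

theorem hasDerivAt_integral_exp_div_sq_mul {g c : ℝ → ℝ} (hg : Continuous g) (hg0 : ∀ y, g y ≠ 0)
    (hc : Continuous c) (m a b t : ℝ) :
    HasDerivAt (fun s => ∫ y in a..b, Real.exp (-(m * s * g y)) / g y ^ 2 * c y)
      (-m * ∫ y in a..b, Real.exp (-(m * t * g y)) / g y * c y) t := by
  rw [← intervalIntegral.integral_const_mul]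
  exact hasDerivAt_intervalIntegral_of_continuous (by fun_prop (disch := intro; simp [hg0]))
    (by fun_prop (disch := intro; simp [hg0]))
    (fun s y => hasDerivAt_exp_div_sq_mul (hg0 y) m (c y) s) a b t

/-- For t > 0, d/dt EL_i(t) = λ − μ·(1 − p_{i0}(t)). -/
theorem EL_deriv (lam mu : ℝ) (hlam : 0 < lam) (hmu : 0 < mu)
    (hρ : lam / mu < 1) (i : ℕ) :
    ∀ t : ℝ, 0 < t →
      HasDerivAt (fun s : ℝ => EL lam mu i s)
        (lam - mu * (1 - pq lam mu i 0 t)) t := by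
  intro t _
  set ρ := lam / mu with hρ_def
  have hρ0 : 0 < ρ := div_pos hlam hmu
  have hI := hasDerivAt_integral_exp_div_sq_mul (continuous_gam ρ)
    (fun y => (gam_pos hρ0.le hρ y).ne') (c := fun y => aco ρ i y * Real.sin y) (by fun_prop)
    mu 0 π t
  set J := ∫ y in (0 : ℝ)..π, Real.exp (-(mu * t * gam ρ y)) / gam ρ y * (aco ρ i y * Real.sin y)
  have hJ0 : ∫ y in (0 : ℝ)..π, Real.exp (-(mu * t * gam ρ y)) / gam ρ y * (aco ρ i y * aco ρ 0 y)
      = -Real.sqrt ρ * J := by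
    rw [← intervalIntegral.integral_const_mul]
    refine intervalIntegral.integral_congr fun y _ => ?_
    simp only [aco_zero]
    ring
  have hrpow : ρ ^ (-((i : ℝ) / 2)) * Real.sqrt ρ = ρ ^ ((1 - (i : ℝ)) / 2) := by
    rw [Real.sqrt_eq_rpow, ← Real.rpow_add hρ0]
    ring_nf
  have hlam_eq : mu * ρ = lam := by rw [hρ_def]; field_simp
  refine ((hI.const_mul _).add_const _).congr_deriv ?_
  rw [pq, ← hρ_def, hJ0]
  simp only [Nat.cast_zero, zero_sub, pow_zero, mul_one, neg_div]
  clear_value ρ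
  linear_combination hlam_eq + (2 / π * mu * J) * hrpow
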